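/- arXiv:2512.06561 — 3 statements merged into one kernel-verified Lean document; each statement's English description precedes it below -/
import Mathlib

section
/- Let Z be a sparsity pattern with associated digraph G, let k ≥ 0 and q ≥ 1 be integers, and let Ĝ be the ensemble digraph of G of order q. Then the condition '(k+1)·|N^β_in(V')| + (k+1)·q·|N^α_in(V')| ≥ q·|V'| for every subset V' of the state nodes of G' holds if and only if '(k+1)·|N_in(V̂')| ≥ |V̂'| for every subset V̂' of the state nodes of Ĝ', where N_in is the in-neighbor set computed in Ĝ. -/
/-- The α-in-neighbor set `N^α_in(V')` of a set `V'` of state nodes, for the digraph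
associated with the sparsity pattern `Z`. -/
def NinA {n m : ℕ} (Z : Finset (Fin n × (Fin n ⊕ Fin m))) (V' : Finset (Fin n)) :
    Finset (Fin n) :=
  Finset.univ.filter fun j => ∃ i ∈ V', (i, Sum.inl j) ∈ Z

/-- The β-in-neighbor set `N^β_in(V')` of a set `V'` of state nodes. -/
def NinB {n m : ℕ} (Z : Finset (Fin n × (Fin n ⊕ Fin m))) (V' : Finset (Fin n)) :
    Finset (Fin m) :=
  Finset.univ.filter fun j => ∃ i ∈ V', (i, Sum.inr j) ∈ Z

/-- The state in-neighbors of a set `W` of state nodes of the ensemble digraph `Ĝ` of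
order `q`: state node `α̂_{p,i}` is an in-neighbor of `W` iff there is `α̂_{p,j} ∈ W`
with an edge `α_i → α_j` in `G`. -/
def NinHatA {n m : ℕ} (Z : Finset (Fin n × (Fin n ⊕ Fin m))) (q : ℕ)
    (W : Finset (Fin q × Fin n)) : Finset (Fin q × Fin n) :=
  Finset.univ.filter fun x => ∃ j : Fin n, (x.1, j) ∈ W ∧ (j, Sum.inl x.2) ∈ Z

/-- The control in-neighbors of a set `W` of state nodes of the ensemble digraph `Ĝ`:
control node `β̂_i` is an in-neighbor of `W` iff there is `α̂_{p,j} ∈ W` with an edge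
`β_i → α_j` in `G`. -/
def NinHatB {n m : ℕ} (Z : Finset (Fin n × (Fin n ⊕ Fin m))) (q : ℕ)
    (W : Finset (Fin q × Fin n)) : Finset (Fin m) :=
  Finset.univ.filter fun i => ∃ y ∈ W, (y.2, Sum.inr i) ∈ Z

/-- the counting condition on `G`,
`(k+1)|N^β_in(V')| + (k+1)q|N^α_in(V')| ≥ q|V'|` for all subsets `V'` of state nodes,
holds iff the counting condition `(k+1)|N_in(V̂')| ≥ |V̂'|` holds for all subsets `V̂'`
of the state nodes of the ensemble digraph `Ĝ` of order `q`. -/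
theorem stmt7 {n m : ℕ} (hn : 0 < n) (hm : 0 < m)
    (Z : Finset (Fin n × (Fin n ⊕ Fin m))) (k q : ℕ) (hq : 1 ≤ q) :
    (∀ V' : Finset (Fin n),
        q * V'.card ≤ (k + 1) * (NinB Z V').card + (k + 1) * q * (NinA Z V').card) ↔
      (∀ W : Finset (Fin q × Fin n),
        W.card ≤ (k + 1) * ((NinHatB Z q W).card + (NinHatA Z q W).card)) := by
  constructor
  · intro h W
    set Vp : Fin q → Finset (Fin n) :=
      fun p => Finset.univ.filter fun i => (p, i) ∈ W with hVp
    have emb : ∀ p : Fin q, Function.Injective (fun i : Fin n => (p, i)) := by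
      intro p a b hab; simpa using congrArg Prod.snd hab
    have hWfib : ∀ p, W.filter (fun x => x.1 = p) = (Vp p).map ⟨fun i => (p, i), emb p⟩ := by
      intro p; ext ⟨a, b⟩
      simp only [Finset.mem_filter, Finset.mem_map, Function.Embedding.coeFn_mk, hVp,
        Finset.mem_univ, true_and, Prod.mk.injEq]
      constructor
      · rintro ⟨hab, rfl⟩
        exact ⟨b, hab, rfl, rfl⟩
      · rintro ⟨i, hi, rfl, rfl⟩
        exact ⟨hi, rfl⟩
    have hWcard : W.card = ∑ p, (Vp p).card := by
      rw [Finset.card_eq_sum_card_fiberwise (f := Prod.fst) (t := Finset.univ)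
        (fun x _ => Finset.mem_univ x.1)]
      exact Finset.sum_congr rfl fun p _ => by rw [hWfib p, Finset.card_map]
    have hAfib : ∀ p, (NinHatA Z q W).filter (fun x => x.1 = p)
        = (NinA Z (Vp p)).map ⟨fun i => (p, i), emb p⟩ := by
      intro p; ext ⟨a, b⟩
      simp only [Finset.mem_filter, Finset.mem_map, Function.Embedding.coeFn_mk, hVp,
        NinHatA, NinA, Finset.mem_univ, true_and, Prod.mk.injEq]
      constructor
      · rintro ⟨⟨j, hjW, hjZ⟩, rfl⟩
        exact ⟨b, ⟨j, hjW, hjZ⟩, rfl, rfl⟩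
      · rintro ⟨i, ⟨j, hjW, hjZ⟩, rfl, rfl⟩
        exact ⟨⟨j, hjW, hjZ⟩, rfl⟩
    have hAcard : (NinHatA Z q W).card = ∑ p, (NinA Z (Vp p)).card := by
      rw [Finset.card_eq_sum_card_fiberwise (f := Prod.fst) (t := Finset.univ)
        (fun x _ => Finset.mem_univ x.1)]
      exact Finset.sum_congr rfl fun p _ => by rw [hAfib p, Finset.card_map]
    have hB : ∀ p, NinB Z (Vp p) ⊆ NinHatB Z q W := by
      intro p i hi
      simp only [NinB, hVp, Finset.mem_filter, Finset.mem_univ, true_and] at hi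
      obtain ⟨j, hj, hZ⟩ := hi
      simp only [NinHatB, Finset.mem_filter, Finset.mem_univ, true_and]
      exact ⟨(p, j), hj, hZ⟩
    have key : q * W.card
        ≤ q * ((k + 1) * ((NinHatB Z q W).card + (NinHatA Z q W).card)) := by
      calc q * W.card = ∑ p, q * (Vp p).card := by rw [hWcard, Finset.mul_sum]
        _ ≤ ∑ p, ((k + 1) * (NinB Z (Vp p)).card + (k + 1) * q * (NinA Z (Vp p)).card) :=
            Finset.sum_le_sum fun p _ => h (Vp p)
        _ ≤ ∑ p, ((k + 1) * (NinHatB Z q W).card + (k + 1) * q * (NinA Z (Vp p)).card) :=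
            Finset.sum_le_sum fun p _ =>
              Nat.add_le_add_right
                (Nat.mul_le_mul_left _ (Finset.card_le_card (hB p))) _
        _ = q * ((k + 1) * (NinHatB Z q W).card)
              + (k + 1) * q * (NinHatA Z q W).card := by
            rw [Finset.sum_add_distrib, Finset.sum_const, ← Finset.mul_sum, ← hAcard]
            simp [mul_comm]
        _ = q * ((k + 1) * ((NinHatB Z q W).card + (NinHatA Z q W).card)) := by ring
    exact Nat.le_of_mul_le_mul_left key (Nat.lt_of_lt_of_le Nat.zero_lt_one hq)
  · intro h V'
    set W : Finset (Fin q × Fin n) := (Finset.univ : Finset (Fin q)) ×ˢ V' with hW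
    have hWcard : W.card = q * V'.card := by
      simp [hW, Finset.card_product]
    have hBeq : NinHatB Z q W = NinB Z V' := by
      ext i
      simp only [NinHatB, NinB, hW, Finset.mem_filter, Finset.mem_univ, true_and,
        Finset.mem_product]
      constructor
      · rintro ⟨y, hy, hZ⟩
        exact ⟨y.2, hy, hZ⟩
      · rintro ⟨j, hj, hZ⟩
        exact ⟨(⟨0, Nat.lt_of_lt_of_le Nat.zero_lt_one hq⟩, j), hj, hZ⟩
    have hAeq : NinHatA Z q W = (Finset.univ : Finset (Fin q)) ×ˢ NinA Z V' := by
      ext ⟨p, i⟩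
      simp only [NinHatA, NinA, hW, Finset.mem_filter, Finset.mem_univ, true_and,
        Finset.mem_product]
    have := h W
    rw [hWcard, hBeq, hAeq] at this
    calc q * V'.card
        ≤ (k + 1) * ((NinB Z V').card
            + ((Finset.univ : Finset (Fin q)) ×ˢ NinA Z V').card) := this
      _ = (k + 1) * (NinB Z V').card + (k + 1) * q * (NinA Z V').card := by
          rw [Finset.card_product]
          simp [Finset.card_univ]
          ring
end

section
/- Let Z be a sparsity pattern. If Z is structurally controllable for (k,q), then for every integer k' ≥ k and every integer q' with 1 ≤ q' ≤ q, Z is structurally controllable for (k',q'). -/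
/-- The edge relation of the digraph `G` associated with the sparsity pattern `Z`:
nodes are `Sum.inl i` (state node `α_i`) and `Sum.inr j` (control node `β_j`). -/
def GEdge {n m : ℕ} (Z : Finset (Fin n × (Fin n ⊕ Fin m))) :
    (Fin n ⊕ Fin m) → (Fin n ⊕ Fin m) → Prop :=
  fun v w => ∃ i : Fin n, w = Sum.inl i ∧ (i, v) ∈ Z

/-- `[A B]` conforms to the sparsity pattern `Z`. -/
def Conforms {n m : ℕ} (Z : Finset (Fin n × (Fin n ⊕ Fin m)))
    (A : Matrix (Fin n) (Fin n) ℝ) (B : Matrix (Fin n) (Fin m) ℝ) : Prop :=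
  (∀ i j, (i, Sum.inl j) ∉ Z → A i j = 0) ∧ (∀ i j, (i, Sum.inr j) ∉ Z → B i j = 0)

/-- The block-diagonal matrix `A[ℓ] = blockdiag(A_1[ℓ],…,A_q[ℓ])`. -/
def blockDiagA {n : ℕ} (q : ℕ) (A : Fin q → Matrix (Fin n) (Fin n) ℝ) :
    Matrix (Fin q × Fin n) (Fin q × Fin n) ℝ :=
  fun x y => if x.1 = y.1 then A x.1 x.2 y.2 else 0

/-- The vertically stacked matrix `B[ℓ] = [B_1[ℓ]; …; B_q[ℓ]]`. -/
def stackB {n m : ℕ} (q : ℕ) (B : Fin q → Matrix (Fin n) (Fin m) ℝ) :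
    Matrix (Fin q × Fin n) (Fin m) ℝ :=
  fun x j => B x.1 x.2 j

/-- The k-switched linear q-ensemble determined by the matrices is controllable:
the columns of `A[ℓ]^d B[ℓ]`, over `ℓ = 0,…,k` and `d = 0,…,qn−1`, span `ℝ^{qn}`. -/
def EnsembleControllable {n m : ℕ} (k q : ℕ)
    (A : Fin (k + 1) → Fin q → Matrix (Fin n) (Fin n) ℝ)
    (B : Fin (k + 1) → Fin q → Matrix (Fin n) (Fin m) ℝ) : Prop :=
  Submodule.span ℝ
    {v : Fin q × Fin n → ℝ |
      ∃ (ℓ : Fin (k + 1)) (d : ℕ), d < q * n ∧ ∃ j : Fin m,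
        v = fun x => ((blockDiagA q (A ℓ)) ^ d * stackB q (B ℓ)) x j} = ⊤

/-- The sparsity pattern `Z` is structurally controllable for `(k, q)`. -/
def StructurallyControllable {n m : ℕ} (Z : Finset (Fin n × (Fin n ⊕ Fin m)))
    (k q : ℕ) : Prop :=
  ∃ (A : Fin (k + 1) → Fin q → Matrix (Fin n) (Fin n) ℝ)
    (B : Fin (k + 1) → Fin q → Matrix (Fin n) (Fin m) ℝ),
    (∀ ℓ p, Conforms Z (A ℓ p) (B ℓ p)) ∧ EnsembleControllable k q A B



lemma blockDiagA_mul {n q : ℕ} (A B : Fin q → Matrix (Fin n) (Fin n) ℝ) :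
    blockDiagA q A * blockDiagA q B = blockDiagA q fun p => A p * B p := by
  ext x y
  simp only [Matrix.mul_apply, blockDiagA, Fintype.sum_prod_type, ite_mul, mul_ite, zero_mul,
    mul_zero]
  rcases eq_or_ne x.1 y.1 with h | h
  · simp [h, Matrix.mul_apply]
  · simp [h]

lemma blockDiagA_pow {n q : ℕ} (A : Fin q → Matrix (Fin n) (Fin n) ℝ) (d : ℕ) :
    blockDiagA q A ^ d = blockDiagA q fun p => A p ^ d := by
  induction d with
  | zero =>
    ext x y
    simp only [pow_zero, blockDiagA, Matrix.one_apply]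
    rcases x with ⟨p, i⟩; rcases y with ⟨p', i'⟩
    by_cases h : p = p' <;> simp [h, Prod.ext_iff]
  | succ d ih => rw [pow_succ, ih, blockDiagA_mul]; simp [pow_succ]

lemma blockDiagA_mul_stackB {n m q : ℕ} (A : Fin q → Matrix (Fin n) (Fin n) ℝ)
    (B : Fin q → Matrix (Fin n) (Fin m) ℝ) :
    blockDiagA q A * stackB q B = stackB q fun p => A p * B p := by
  ext x j
  simp only [Matrix.mul_apply, blockDiagA, stackB, Fintype.sum_prod_type, ite_mul, zero_mul]
  simp [Matrix.mul_apply]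

lemma pow_repr {ι : Type*} [Fintype ι] [DecidableEq ι] [Nonempty ι]
    (M : Matrix ι ι ℝ) (d : ℕ) :
    ∃ c : ℕ → ℝ, M ^ d = ∑ e ∈ Finset.range (Fintype.card ι), c e • M ^ e := by
  set p := (Polynomial.X ^ d) %ₘ M.charpoly with hp
  have h1 : M.charpoly.natDegree = Fintype.card ι := M.charpoly_natDegree_eq_dim
  have hcard : 0 < Fintype.card ι := Fintype.card_pos
  have hne : M.charpoly ≠ 1 := by
    intro hc
    rw [hc, Polynomial.natDegree_one] at h1
    omega
  have hdeg : p.natDegree < Fintype.card ι := by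
    rw [← h1]
    exact Polynomial.natDegree_modByMonic_lt _ M.charpoly_monic hne
  have hMd : M ^ d = Polynomial.aeval M p := Matrix.pow_eq_aeval_mod_charpoly M d
  rw [Polynomial.aeval_eq_sum_range' hdeg] at hMd
  exact ⟨p.coeff, hMd⟩
/-- if `Z` is structurally controllable for `(k, q)`, then it is
structurally controllable for `(k', q')` for every `k' ≥ k` and every `1 ≤ q' ≤ q`. -/
theorem stmt11 {n m : ℕ} (hn : 0 < n) (hm : 0 < m)
    (Z : Finset (Fin n × (Fin n ⊕ Fin m))) (k q : ℕ)
    (h : StructurallyControllable Z k q) :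
    ∀ k' q' : ℕ, k ≤ k' → 1 ≤ q' → q' ≤ q → StructurallyControllable Z k' q' := by
  intro k' q' hk hq1 hq
  obtain ⟨A, B, hconf, hctrl⟩ := h
  haveI : Nonempty (Fin q' × Fin n) :=
    ⟨(⟨0, hq1⟩, ⟨0, hn⟩)⟩
  set f : Fin (k' + 1) → Fin (k + 1) :=
    fun ℓ => ⟨min ℓ.val k, Nat.lt_succ_of_le (min_le_right _ _)⟩ with hf
  set A' : Fin (k' + 1) → Fin q' → Matrix (Fin n) (Fin n) ℝ :=
    fun ℓ p => A (f ℓ) (Fin.castLE hq p) with hA'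
  set B' : Fin (k' + 1) → Fin q' → Matrix (Fin n) (Fin m) ℝ :=
    fun ℓ p => B (f ℓ) (Fin.castLE hq p) with hB'
  refine ⟨A', B', fun ℓ p => hconf _ _, ?_⟩
  unfold EnsembleControllable at hctrl ⊢
  set π : (Fin q × Fin n → ℝ) →ₗ[ℝ] (Fin q' × Fin n → ℝ) :=
    LinearMap.funLeft ℝ ℝ (fun x => (Fin.castLE hq x.1, x.2)) with hπdef
  have hinj : Function.Injective (fun x : Fin q' × Fin n => ((Fin.castLE hq x.1, x.2) : Fin q × Fin n)) := by
    rintro ⟨a, b⟩ ⟨c, d⟩ hxy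
    simp only [Prod.mk.injEq] at hxy
    exact Prod.ext (Fin.castLE_injective hq hxy.1) hxy.2
  have hπ : Function.Surjective π := LinearMap.funLeft_surjective_of_injective _ _ _ hinj
  have h2 : Submodule.span ℝ (π '' {v : Fin q × Fin n → ℝ |
      ∃ (ℓ : Fin (k + 1)) (d : ℕ), d < q * n ∧ ∃ j : Fin m,
        v = fun x => ((blockDiagA q (A ℓ)) ^ d * stackB q (B ℓ)) x j}) = ⊤ := by
    rw [← Submodule.map_span, hctrl, Submodule.map_top, LinearMap.range_eq_top.mpr hπ]
  rw [eq_top_iff, ← h2]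
  apply Submodule.span_le.mpr
  rintro v ⟨w, ⟨ℓ, d, hd, j, rfl⟩, rfl⟩
  set ℓ'' : Fin (k' + 1) := Fin.castLE (by omega) ℓ with hℓ''
  have hfℓ : f ℓ'' = ℓ := by
    apply Fin.ext
    simp only [hf, hℓ'', Fin.coe_castLE]
    exact min_eq_left (Nat.lt_succ_iff.mp ℓ.isLt)
  set M : Matrix (Fin q' × Fin n) (Fin q' × Fin n) ℝ := blockDiagA q' (A' ℓ'') with hM
  set Bm : Matrix (Fin q' × Fin n) (Fin m) ℝ := stackB q' (B' ℓ'') with hBm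
  have hw : π (fun x => ((blockDiagA q (A ℓ)) ^ d * stackB q (B ℓ)) x j)
      = fun x => (M ^ d * Bm) x j := by
    funext x
    simp only [hπdef, LinearMap.funLeft_apply]
    rw [blockDiagA_pow, blockDiagA_mul_stackB, hM, blockDiagA_pow, blockDiagA_mul_stackB]
    simp [stackB, hA', hB', hfℓ]
  rw [hw]
  obtain ⟨c, hc⟩ := pow_repr M d
  have hcard : Fintype.card (Fin q' × Fin n) = q' * n := by simp
  rw [hcard] at hc
  have hsum : (fun x => (M ^ d * Bm) x j)
      = ∑ e ∈ Finset.range (q' * n), c e • fun x => (M ^ e * Bm) x j := by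
    funext x
    rw [hc]
    simp [Matrix.sum_mul, Matrix.sum_apply, Matrix.smul_mul, Finset.sum_apply]
  rw [hsum]
  apply Submodule.sum_mem
  intro e he
  apply Submodule.smul_mem
  apply Submodule.subset_span
  exact ⟨ℓ'', e, Finset.mem_range.mp he, j, rfl⟩
end

section
/- Let Z ⊆ {1,…,n}×{1,…,n+m} be a sparsity pattern and q ≥ 1. Define the ensemble sparsity pattern Ẑ ⊆ {1,…,qn}×{1,…,qn+m} by: for 1 ≤ i,j ≤ n and 1 ≤ p ≤ q, the position ((p−1)n+i, (p−1)n+j) belongs to Ẑ iff (i,j) ∈ Z, the position ((p−1)n+i, qn+j') belongs to Ẑ (for 1 ≤ j' ≤ m) iff (i, n+j') ∈ Z, and no other positions belong to Ẑ. Then for every k ≥ 0, Z is structurally controllable for (k,q) if and only if Ẑ is structurally controllable for (k,1). -/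
/-- `[A B]` conforms to a sparsity pattern on `N × (N + M)` positions. -/
def Conforms' {N M : ℕ} (Z : Finset (Fin N × (Fin N ⊕ Fin M)))
    (A : Matrix (Fin N) (Fin N) ℝ) (B : Matrix (Fin N) (Fin M) ℝ) : Prop :=
  (∀ i j, (i, Sum.inl j) ∉ Z → A i j = 0) ∧ (∀ i j, (i, Sum.inr j) ∉ Z → B i j = 0)

/-- A sparsity pattern on `N × (N + M)` positions is structurally controllable for
`(k, 1)`: there are conforming matrices `A[ℓ] ∈ ℝ^{N×N}`, `B[ℓ] ∈ ℝ^{N×M}`,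
`ℓ = 0,…,k`, such that the columns of `A[ℓ]^d B[ℓ]`, over all `ℓ = 0,…,k` and
`d = 0,…,N−1`, span `ℝ^N`. -/
def StructurallyControllableSingle {N M : ℕ}
    (Z : Finset (Fin N × (Fin N ⊕ Fin M))) (k : ℕ) : Prop :=
  ∃ (A : Fin (k + 1) → Matrix (Fin N) (Fin N) ℝ)
    (B : Fin (k + 1) → Matrix (Fin N) (Fin M) ℝ),
    (∀ ℓ, Conforms' Z (A ℓ) (B ℓ)) ∧
      Submodule.span ℝ
        {v : Fin N → ℝ |
          ∃ (ℓ : Fin (k + 1)) (d : ℕ), d < N ∧ ∃ j : Fin M,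
            v = fun i => ((A ℓ) ^ d * B ℓ) i j} = ⊤

/-- The ensemble sparsity pattern `Ẑ ⊆ {1,…,qn} × ({1,…,qn} ⊕ {1,…,m})` of `Z`:
row `a` and column `b` of the `A`-block are admissible iff they lie in the same
diagonal block (`a / n = b / n`) and `(a % n, b % n)` is admissible for `Z`;
row `a` and column `j` of the `B`-block are admissible iff `(a % n, n + j)` is
admissible for `Z`. -/
noncomputable def hatZ {n m : ℕ} (hn : 0 < n) (q : ℕ)
    (Z : Finset (Fin n × (Fin n ⊕ Fin m))) :
    Finset (Fin (q * n) × (Fin (q * n) ⊕ Fin m)) :=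
  have := Classical.propDecidable
  Finset.univ.filter fun x =>
    (∃ b : Fin (q * n), x.2 = Sum.inl b ∧ x.1.val / n = b.val / n ∧
      ((⟨x.1.val % n, Nat.mod_lt _ hn⟩ : Fin n),
        Sum.inl (⟨b.val % n, Nat.mod_lt _ hn⟩ : Fin n)) ∈ Z) ∨
    (∃ j : Fin m, x.2 = Sum.inr j ∧
      ((⟨x.1.val % n, Nat.mod_lt _ hn⟩ : Fin n), Sum.inr j) ∈ Z)

/-!
Write `e : Fin q × Fin n ≃ Fin (q * n)` for the index map `(p, i) ↦ p n + i`. Up to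
reindexing along `e`, the matrices conforming to `Ẑ` are exactly the block-diagonal
matrices `blockdiag(A_1, …, A_q)` and stacked matrices `[B_1; …; B_q]` whose blocks
`[A_p B_p]` conform to `Z`, because `Ẑ` forbids every entry outside the diagonal blocks.
Reindexing commutes with powers and products, so it carries the columns of the `A^d B`
of one system to those of the other by the coordinate permutation `v ↦ v ∘ e⁻¹`, a linear
automorphism, and spanning is preserved.
-/

open Matrix

section Controllability

variable {R ι κ μ L : Type*} [Semiring R] [Fintype ι] [DecidableEq ι] [Fintype κ]
  [DecidableEq κ]

def controllabilityColumns (A : L → Matrix ι ι R) (B : L → Matrix ι μ R) (N : ℕ) :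
    Set (ι → R) :=
  {v | ∃ (ℓ : L) (d : ℕ), d < N ∧ ∃ j : μ, v = fun x => (A ℓ ^ d * B ℓ) x j}

theorem reindex_pow_mul_reindex (e : ι ≃ κ) (A : Matrix ι ι R) (B : Matrix ι μ R) (d : ℕ) :
    reindex e e A ^ d * reindex e (Equiv.refl μ) B = reindex e (Equiv.refl μ) (A ^ d * B) := by
  rw [← coe_reindexRingEquiv, ← map_pow, coe_reindexRingEquiv, reindex_apply, reindex_apply,
    reindex_apply, submatrix_mul_equiv]

theorem controllabilityColumns_reindex (e : ι ≃ κ) (A : L → Matrix ι ι R)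
    (B : L → Matrix ι μ R) (N : ℕ) :
    controllabilityColumns (fun ℓ => reindex e e (A ℓ)) (fun ℓ => reindex e (Equiv.refl μ) (B ℓ)) N
      = LinearEquiv.funCongrLeft R R e.symm '' controllabilityColumns A B N := by
  ext v
  simp only [controllabilityColumns, reindex_pow_mul_reindex, Set.mem_image]
  constructor
  · rintro ⟨ℓ, d, hd, j, rfl⟩
    exact ⟨_, ⟨ℓ, d, hd, j, rfl⟩, rfl⟩
  · rintro ⟨_, ⟨ℓ, d, hd, j, rfl⟩, rfl⟩
    exact ⟨ℓ, d, hd, j, rfl⟩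

theorem span_controllabilityColumns_reindex_eq_top_iff (e : ι ≃ κ) (A : L → Matrix ι ι R)
    (B : L → Matrix ι μ R) (N : ℕ) :
    Submodule.span R (controllabilityColumns (fun ℓ => reindex e e (A ℓ))
        (fun ℓ => reindex e (Equiv.refl μ) (B ℓ)) N) = ⊤ ↔
      Submodule.span R (controllabilityColumns A B N) = ⊤ := by
  rw [controllabilityColumns_reindex, Submodule.span_image_linearEquiv, Submodule.map_eq_top_iff]

section EnsemblePattern

variable {n m q : ℕ}

theorem finProdFinEquiv_val_div (x : Fin q × Fin n) : (finProdFinEquiv x : ℕ) / n = x.1 :=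
  congrArg (fun y => (y.1 : ℕ)) (finProdFinEquiv.symm_apply_apply x)

theorem finProdFinEquiv_val_mod (x : Fin q × Fin n) : (finProdFinEquiv x : ℕ) % n = x.2 :=
  congrArg (fun y => (y.2 : ℕ)) (finProdFinEquiv.symm_apply_apply x)

theorem finProdFinEquiv_mod_mk (x : Fin q × Fin n) (h : (finProdFinEquiv x : ℕ) % n < n) :
    (⟨(finProdFinEquiv x : ℕ) % n, h⟩ : Fin n) = x.2 :=
  Fin.ext (finProdFinEquiv_val_mod x)

variable (hn : 0 < n) {Z : Finset (Fin n × (Fin n ⊕ Fin m))}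

theorem mem_hatZ_inl (x y : Fin q × Fin n) :
    (finProdFinEquiv x, Sum.inl (finProdFinEquiv y)) ∈ hatZ hn q Z ↔
      x.1 = y.1 ∧ (x.2, Sum.inl y.2) ∈ Z := by
  simp only [hatZ, Finset.mem_filter, Finset.mem_univ, true_and, Sum.inl.injEq,
    exists_eq_left', finProdFinEquiv_val_div, Fin.val_inj, finProdFinEquiv_mod_mk]
  simp

theorem mem_hatZ_inr (x : Fin q × Fin n) (j : Fin m) :
    (finProdFinEquiv x, Sum.inr j) ∈ hatZ hn q Z ↔ (x.2, Sum.inr j) ∈ Z := by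
  simp only [hatZ, Finset.mem_filter, Finset.mem_univ, true_and, finProdFinEquiv_mod_mk]
  simp

variable {A : Fin q → Matrix (Fin n) (Fin n) ℝ} {B : Fin q → Matrix (Fin n) (Fin m) ℝ}
  {Ah : Matrix (Fin (q * n)) (Fin (q * n)) ℝ} {Bh : Matrix (Fin (q * n)) (Fin m) ℝ}

theorem conforms'_hatZ_reindex (h : ∀ p, Conforms Z (A p) (B p)) :
    Conforms' (hatZ hn q Z) (reindex finProdFinEquiv finProdFinEquiv (blockDiagA q A))
      (reindex finProdFinEquiv (Equiv.refl _) (stackB q B)) := by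
  constructor
  · intro a b hab
    obtain ⟨x, rfl⟩ := finProdFinEquiv.surjective a
    obtain ⟨y, rfl⟩ := finProdFinEquiv.surjective b
    rw [mem_hatZ_inl, not_and] at hab
    simp only [reindex_apply, submatrix_apply, Equiv.symm_apply_apply, blockDiagA]
    split_ifs with hxy
    · exact (h x.1).1 _ _ (hab hxy)
    · rfl
  · intro a j haj
    obtain ⟨x, rfl⟩ := finProdFinEquiv.surjective a
    rw [mem_hatZ_inr] at haj
    simp only [reindex_apply, submatrix_apply, Equiv.symm_apply_apply, stackB]
    exact (h x.1).2 _ _ haj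

theorem conforms_block_of_conforms'_hatZ (h : Conforms' (hatZ hn q Z) Ah Bh) (p : Fin q) :
    Conforms Z (Ah.submatrix (fun i => finProdFinEquiv (p, i)) (fun j => finProdFinEquiv (p, j)))
      (Bh.submatrix (fun i => finProdFinEquiv (p, i)) id) :=
  ⟨fun _ _ hij => h.1 _ _ fun hmem => hij ((mem_hatZ_inl hn _ _).1 hmem).2,
    fun _ _ hij => h.2 _ _ fun hmem => hij ((mem_hatZ_inr hn _ _).1 hmem)⟩

theorem reindex_blockDiagA_blocks (h : Conforms' (hatZ hn q Z) Ah Bh) :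
    reindex finProdFinEquiv finProdFinEquiv (blockDiagA q fun p =>
      Ah.submatrix (fun i => finProdFinEquiv (p, i)) (fun j => finProdFinEquiv (p, j))) = Ah := by
  ext a b
  obtain ⟨x, rfl⟩ := finProdFinEquiv.surjective a
  obtain ⟨y, rfl⟩ := finProdFinEquiv.surjective b
  simp only [reindex_apply, submatrix_apply, Equiv.symm_apply_apply, blockDiagA]
  split_ifs with hxy
  · rw [show (x.1, y.2) = y from Prod.ext hxy rfl]
  · exact (h.1 _ _ fun hmem => hxy ((mem_hatZ_inl hn x y).1 hmem).1).symm

theorem reindex_stackB_blocks :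
    reindex finProdFinEquiv (Equiv.refl _)
      (stackB q fun p => Bh.submatrix (fun i => finProdFinEquiv (p, i)) id) = Bh := by
  ext a j
  exact congrArg (Bh · j) (finProdFinEquiv.apply_symm_apply a)

end EnsemblePattern

theorem stmt12_general {n m : ℕ} (hn : 0 < n)
    (Z : Finset (Fin n × (Fin n ⊕ Fin m))) (q : ℕ) (k : ℕ) :
    StructurallyControllable Z k q ↔
      StructurallyControllableSingle (hatZ hn q Z) k := by
  -- both controllability conditions unfold to spans of `controllabilityColumns`
  have hspan (A : Fin (k + 1) → Fin q → Matrix (Fin n) (Fin n) ℝ)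
      (B : Fin (k + 1) → Fin q → Matrix (Fin n) (Fin m) ℝ) :=
    span_controllabilityColumns_reindex_eq_top_iff finProdFinEquiv
      (fun ℓ => blockDiagA q (A ℓ)) (fun ℓ => stackB q (B ℓ)) (q * n)
  constructor
  · rintro ⟨A, B, hconf, hctrl⟩
    exact ⟨_, _, fun ℓ => conforms'_hatZ_reindex hn (hconf ℓ), (hspan A B).2 hctrl⟩
  · rintro ⟨Ah, Bh, hconf, hctrl⟩
    refine ⟨fun ℓ p => (Ah ℓ).submatrix (fun i => finProdFinEquiv (p, i))
        (fun j => finProdFinEquiv (p, j)),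
      fun ℓ p => (Bh ℓ).submatrix (fun i => finProdFinEquiv (p, i)) id,
      fun ℓ => conforms_block_of_conforms'_hatZ hn (hconf ℓ), (hspan _ _).1 ?_⟩
    simp only [reindex_blockDiagA_blocks hn (hconf _), reindex_stackB_blocks]
    exact hctrl

/-- `Z` is structurally controllable for `(k, q)` iff the ensemble
sparsity pattern `Ẑ` is structurally controllable for `(k, 1)`. -/
theorem stmt12 {n m : ℕ} (hn : 0 < n) (hm : 0 < m)
    (Z : Finset (Fin n × (Fin n ⊕ Fin m))) (q : ℕ) (hq : 1 ≤ q) (k : ℕ) :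
    StructurallyControllable Z k q ↔
      StructurallyControllableSingle (hatZ hn q Z) k :=
  stmt12_general hn Z q k
end Controllability
end
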